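/- arXiv:2404.03388 — 5 statements merged into one kernel-verified Lean document; each statement's English description precedes it below -/
import Mathlib

section
/- Let p be a prime, a ≥ 2 an integer, m = ⌈a/2⌉ and k = a − m = ⌊a/2⌋. Let χ be a primitive Dirichlet character modulo p^a with values in ℂ. Then there exists a unit v ∈ (ZMod (p^k))ˣ such that for every integer u one has χ(1 + p^m·u) = e_{p^k}(v·u), where χ is evaluated at the image of 1 + p^m·u in ZMod (p^a) and e_{p^k} is evaluated at v times the image of u in ZMod (p^k). -/
/-!
Since `2m ≥ a`, we have `(1 + p^m x)(1 + p^m y) ≡ 1 + p^m (x + y) mod p^a`, and since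
`m + k = a`, `p^m x mod p^a` only depends on `x mod p^k`. Hence `u ↦ χ(1 + p^m u)` is an
additive character of `ZMod (p^k)`, i.e. `u ↦ e_{p^k}(c u)` for some `c`. If `c` were not a unit,
then `c p^(k-1) = 0`, so `χ` would be trivial on `1 + p^(a-1) ℤ` and would factor through
`p^(a-1)`, contradicting primitivity.
-/

lemma ZMod.exists_eq_mulShift_stdAddChar {n : ℕ} [NeZero n] (ψ : AddChar (ZMod n) ℂ) :
    ∃ c : ZMod n, ψ = ZMod.stdAddChar.mulShift c := by
  obtain ⟨c, rfl⟩ := AddChar.zmodAddEquiv.surjective ψ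
  exact ⟨c, by ext x; rfl⟩

lemma ZMod.mul_prime_pow_pred_eq_zero {p k : ℕ} (hp : p.Prime) {x : ZMod (p ^ k)}
    (hx : ¬IsUnit x) : x * (p : ZMod (p ^ k)) ^ (k - 1) = 0 := by
  rcases Nat.eq_zero_or_pos k with rfl | hk
  · have := ZMod.subsingleton_iff.mpr (pow_zero p)
    exact Subsingleton.elim _ _
  have : NeZero (p ^ k) := ⟨pow_ne_zero k hp.ne_zero⟩
  have hpx : p ∣ x.val := by
    by_contra hpx
    rw [← ZMod.natCast_zmod_val x, ZMod.isUnit_iff_coprime] at hx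
    exact hx ((hp.coprime_iff_not_dvd.mpr hpx).symm.pow_right k)
  obtain ⟨t, ht⟩ := hpx
  rw [← ZMod.natCast_zmod_val x, ht, Nat.cast_mul, mul_comm (p : ZMod (p ^ k)), mul_assoc,
    ← pow_succ', Nat.sub_add_cancel hk, ← Nat.cast_pow, ZMod.natCast_self, mul_zero]

def ZMod.mulNatHom {n N : ℕ} (d : ℕ) (h : N ∣ d * n) : ZMod n →+ ZMod N :=
  ZMod.lift n ⟨(AddMonoidHom.mulLeft (d : ZMod N)).comp (Int.castAddHom (ZMod N)), by
    simp [← Nat.cast_mul, (ZMod.natCast_eq_zero_iff _ _).mpr h]⟩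

@[simp]
lemma ZMod.mulNatHom_intCast {n N d : ℕ} (h : N ∣ d * n) (u : ℤ) :
    ZMod.mulNatHom d h (u : ZMod n) = d * u := by
  simp [ZMod.mulNatHom]

lemma ZMod.mulNatHom_mul_mulNatHom {n N d : ℕ} (h : N ∣ d * n) (hd : N ∣ d * d)
    (x y : ZMod n) : ZMod.mulNatHom d h x * ZMod.mulNatHom d h y = 0 := by
  obtain ⟨u, rfl⟩ := ZMod.intCast_surjective x
  obtain ⟨v, rfl⟩ := ZMod.intCast_surjective y
  rw [ZMod.mulNatHom_intCast, ZMod.mulNatHom_intCast, mul_mul_mul_comm, ← Nat.cast_mul,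
    (ZMod.natCast_eq_zero_iff _ _).mpr hd, zero_mul]

def MulChar.oneAddAddChar {A R M : Type*} [AddMonoid A] [CommRing R] [CommMonoidWithZero M]
    (χ : MulChar R M) (f : A →+ R) (hf : ∀ x y, f x * f y = 0) : AddChar A M where
  toFun x := χ (1 + f x)
  map_zero_eq_one' := by simp
  map_add_eq_mul' x y := by
    rw [← map_mul, f.map_add]
    congr 1
    linear_combination -(hf x y)

lemma DirichletCharacter.exists_apply_one_add_mul_ne_one {R : Type*} [CommMonoidWithZero R]
    {n d : ℕ} [NeZero n] {χ : DirichletCharacter R n} (hχ : χ.IsPrimitive) (hd : d ∣ n)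
    (hdn : d ≠ n) : ∃ s : ℤ, χ ((1 + d * s : ℤ) : ZMod n) ≠ 1 := by
  by_contra! h
  have hfac : χ.FactorsThrough d := by
    rw [DirichletCharacter.factorsThrough_iff_ker_unitsMap hd]
    intro u hu
    obtain ⟨z, hz⟩ := ZMod.intCast_surjective (u : ZMod n)
    have hzd : ((z : ℤ) : ZMod d) = ((1 : ℤ) : ZMod d) := by
      simpa [← Units.val_inj, ZMod.unitsMap_def, ← hz] using hu
    obtain ⟨s, hs⟩ := (ZMod.intCast_eq_intCast_iff_dvd_sub _ _ _).mp hzd.symm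
    rw [MonoidHom.mem_ker, ← Units.val_inj, MulChar.coe_toUnitHom, ← hz,
      show z = 1 + d * s by omega, Units.val_one, h]
  have hle : n ≤ d := hχ ▸ Nat.sInf_le hfac
  exact hdn (Nat.le_antisymm (Nat.le_of_dvd (NeZero.pos n) hd) hle)

/-- For a primitive Dirichlet character `χ` mod `p^a` with `a ≥ 2`, `m = ⌈a/2⌉`, `k = ⌊a/2⌋`,
there is a unit `v` of `ZMod (p^k)` with `χ(1 + p^m u) = e_{p^k}(v·u)` for all integers `u`,
where `e_{p^k}` is the standard additive character of `ZMod (p^k)`. -/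
theorem exists_unit_additivation (p : ℕ) [Fact p.Prime] (a : ℕ) (ha : 2 ≤ a)
    (χ : DirichletCharacter ℂ (p ^ a)) (hχ : χ.IsPrimitive) :
    ∃ v : (ZMod (p ^ (a / 2)))ˣ, ∀ u : ℤ,
      χ (((1 + (p : ℤ) ^ ((a + 1) / 2) * u : ℤ) : ZMod (p ^ a))) =
        ZMod.stdAddChar ((v : ZMod (p ^ (a / 2))) * (u : ZMod (p ^ (a / 2)))) := by
  have hp : p.Prime := Fact.out
  set m := (a + 1) / 2
  set k := a / 2
  have : NeZero (p ^ k) := ⟨pow_ne_zero k hp.ne_zero⟩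
  have hperiod : p ^ a ∣ p ^ m * p ^ k := by rw [← pow_add]; exact pow_dvd_pow p (by omega)
  have hsq : p ^ a ∣ p ^ m * p ^ m := by rw [← pow_add]; exact pow_dvd_pow p (by omega)
  let ψ := χ.oneAddAddChar (ZMod.mulNatHom (p ^ m) hperiod)
    (ZMod.mulNatHom_mul_mulNatHom hperiod hsq)
  have hχψ (u : ℤ) : χ ((1 + (p : ℤ) ^ m * u : ℤ) : ZMod (p ^ a)) = ψ u := by
    simp [ψ, MulChar.oneAddAddChar]
  obtain ⟨c, hc⟩ := ZMod.exists_eq_mulShift_stdAddChar ψ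
  have hc_unit : IsUnit c := by
    by_contra hc_unit
    obtain ⟨s, hs⟩ := DirichletCharacter.exists_apply_one_add_mul_ne_one hχ
      (pow_dvd_pow p (Nat.sub_le a 1)) (Nat.pow_lt_pow_right hp.one_lt (by omega)).ne
    have hs_eq : (1 + ((p ^ (a - 1) : ℕ) : ℤ) * s : ℤ) =
        1 + (p : ℤ) ^ m * ((p : ℤ) ^ (k - 1) * s) := by
      rw [← mul_assoc, ← pow_add, show m + (k - 1) = a - 1 by omega]
      push_cast
      rfl
    apply hs
    rw [hs_eq, hχψ, hc, AddChar.mulShift_apply]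
    push_cast
    rw [← mul_assoc, ZMod.mul_prime_pow_pred_eq_zero hp hc_unit, zero_mul,
      AddChar.map_zero_eq_one]
  exact ⟨hc_unit.unit, fun u => by rw [hχψ, hc]; rfl⟩
end

section
/- Let p be a prime, a ≥ 2 an integer, m = ⌈a/2⌉ and k = ⌊a/2⌋. Let χ be a primitive Dirichlet character modulo p^a with values in ℂ, and let v ∈ (ZMod (p^k))ˣ satisfy χ(1 + p^m·u) = e_{p^k}(v·u) for all integers u. Let b be an integer with 0 ≤ b ≤ k (equivalently 2b ≤ a), let μ be a Dirichlet character modulo p^b, and let μ' denote the lift of μ to modulus p^a. Then the Gauss sums modulo p^a satisfy τ(χ·μ') = μ(−v̄)·τ(χ), where v̄ ∈ ZMod (p^b) is the image of v under the reduction map ZMod (p^k) → ZMod (p^b). (This is the Gauss-sum form of Tate's GL(1) stability lemma: ε(1/2, μχ, ψ) is a multiple of ε(1/2, χ, ψ) by the value of μ at an explicit unit depending only on χ.) -/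
/-- Gauss-sum form of Tate's GL(1) stability lemma: if `χ` is primitive mod `p^a` (`a ≥ 2`),
`v` is the unit of `ZMod (p^⌊a/2⌋)` with `χ(1 + p^⌈a/2⌉ u) = e_{p^⌊a/2⌋}(v u)`, and `μ` is any
Dirichlet character mod `p^b` with `b ≤ ⌊a/2⌋`, then `τ(χ·μ') = μ(-v̄)·τ(χ)`, where `μ'` is the
lift of `μ` to modulus `p^a` and `v̄` the reduction of `v` mod `p^b`. -/
theorem gauss_sum_stability (p : ℕ) [Fact p.Prime] (a : ℕ) (ha : 2 ≤ a)
    (χ : DirichletCharacter ℂ (p ^ a)) (hχ : χ.IsPrimitive)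
    (v : (ZMod (p ^ (a / 2)))ˣ)
    (hv : ∀ u : ℤ,
      χ (((1 + (p : ℤ) ^ ((a + 1) / 2) * u : ℤ) : ZMod (p ^ a))) =
        ZMod.stdAddChar ((v : ZMod (p ^ (a / 2))) * (u : ZMod (p ^ (a / 2)))))
    (b : ℕ) (hb : b ≤ a / 2) (μ : DirichletCharacter ℂ (p ^ b)) :
    gaussSum (χ * DirichletCharacter.changeLevel
        (pow_dvd_pow p (hb.trans (Nat.div_le_self a 2))) μ) ZMod.stdAddChar =
      μ (-(ZMod.castHom (pow_dvd_pow p hb) (ZMod (p ^ b)) (v : ZMod (p ^ (a / 2))))) *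
        gaussSum χ ZMod.stdAddChar := by
  classical
  have hp : p.Prime := Fact.out
  have hmk : (a + 1) / 2 + a / 2 = a := by omega
  have hka : a / 2 ≤ a := by omega
  have hbm : b ≤ (a + 1) / 2 := by omega
  haveI : NeZero (p ^ a) := ⟨pow_ne_zero _ hp.ne_zero⟩
  haveI : NeZero (p ^ (a / 2)) := ⟨pow_ne_zero _ hp.ne_zero⟩
  set π : ZMod (p ^ a) →+* ZMod (p ^ (a / 2)) :=
    ZMod.castHom (pow_dvd_pow p hka) (ZMod (p ^ (a / 2))) with hπ
  -- nilpotency of p^((a+1)/2)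
  have hp2m : ((p : ZMod (p ^ a))) ^ ((a + 1) / 2) * ((p : ZMod (p ^ a))) ^ ((a + 1) / 2)
      = 0 := by
    rw [← pow_add, ← Nat.cast_pow, ZMod.natCast_eq_zero_iff]
    exact pow_dvd_pow p (by omega)
  -- units 1 + p^((a+1)/2) w
  set Uof : ZMod (p ^ a) → (ZMod (p ^ a))ˣ := fun w =>
    ⟨1 + (p : ZMod (p ^ a)) ^ ((a + 1) / 2) * w, 1 - (p : ZMod (p ^ a)) ^ ((a + 1) / 2) * w,
      by
        have h : ((p : ZMod (p ^ a)) ^ ((a + 1) / 2) * w) *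
            ((p : ZMod (p ^ a)) ^ ((a + 1) / 2) * w) = 0 := by
          rw [mul_mul_mul_comm, hp2m, zero_mul]
        rw [show (1 + (p : ZMod (p ^ a)) ^ ((a + 1) / 2) * w) *
              (1 - (p : ZMod (p ^ a)) ^ ((a + 1) / 2) * w)
            = 1 - ((p : ZMod (p ^ a)) ^ ((a + 1) / 2) * w) *
              ((p : ZMod (p ^ a)) ^ ((a + 1) / 2) * w) by ring,
          h, sub_zero],
      by
        have h : ((p : ZMod (p ^ a)) ^ ((a + 1) / 2) * w) *
            ((p : ZMod (p ^ a)) ^ ((a + 1) / 2) * w) = 0 := by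
          rw [mul_mul_mul_comm, hp2m, zero_mul]
        rw [show (1 - (p : ZMod (p ^ a)) ^ ((a + 1) / 2) * w) *
              (1 + (p : ZMod (p ^ a)) ^ ((a + 1) / 2) * w)
            = 1 - ((p : ZMod (p ^ a)) ^ ((a + 1) / 2) * w) *
              ((p : ZMod (p ^ a)) ^ ((a + 1) / 2) * w) by ring,
          h, sub_zero]⟩ with hUof
  have hUval : ∀ w : ZMod (p ^ a),
      (Uof w : ZMod (p ^ a)) = 1 + (p : ZMod (p ^ a)) ^ ((a + 1) / 2) * w := fun _ => rfl
  -- the standard additive character and multiplication by p^((a+1)/2)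
  have hstd : ∀ z : ZMod (p ^ a),
      ZMod.stdAddChar ((p : ZMod (p ^ a)) ^ ((a + 1) / 2) * z) = ZMod.stdAddChar (π z) := by
    intro z
    have hz : ((z.val : ℤ) : ZMod (p ^ a)) = z := by
      rw [Int.cast_natCast, ZMod.natCast_zmod_val]
    have h1 : (p : ZMod (p ^ a)) ^ ((a + 1) / 2) * z
        = (((p : ℤ) ^ ((a + 1) / 2) * (z.val : ℤ) : ℤ) : ZMod (p ^ a)) := by
      rw [Int.cast_mul, Int.cast_pow, Int.cast_natCast, hz]
    have h2 : π z = (((z.val : ℤ)) : ZMod (p ^ (a / 2))) := by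
      conv_lhs => rw [← hz]
      rw [map_intCast]
    rw [h1, ZMod.stdAddChar_coe, h2, ZMod.stdAddChar_coe]
    congr 1
    have hpa : ((p ^ a : ℕ) : ℂ) ≠ 0 := Nat.cast_ne_zero.mpr (pow_ne_zero _ hp.ne_zero)
    have hpk : ((p ^ (a / 2) : ℕ) : ℂ) ≠ 0 := Nat.cast_ne_zero.mpr (pow_ne_zero _ hp.ne_zero)
    rw [div_eq_div_iff hpa hpk]
    have hsplit : ((p ^ a : ℕ) : ℂ) = (p : ℂ) ^ ((a + 1) / 2) * (p : ℂ) ^ (a / 2) := by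
      rw [← pow_add, hmk]
      push_cast
      ring
    rw [hsplit]
    push_cast
    ring
  -- character sum over ZMod (p^(a/2))
  have hsum : ∀ c : ZMod (p ^ (a / 2)),
      (∑ u : ZMod (p ^ (a / 2)), ZMod.stdAddChar (c * u)) =
      if c = 0 then ((p ^ (a / 2) : ℕ) : ℂ) else 0 := by
    intro c
    have h0 : (∑ u : ZMod (p ^ (a / 2)), ZMod.stdAddChar (c * u)) =
        ∑ u : ZMod (p ^ (a / 2)), (ZMod.stdAddChar.mulShift c) u := by
      simp [AddChar.mulShift_apply]
    have heq : (ZMod.stdAddChar.mulShift c = 0) ↔ c = 0 := by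
      constructor
      · intro h
        by_contra hc
        exact ZMod.isPrimitive_stdAddChar (p ^ (a / 2)) hc
          (by rw [AddChar.one_eq_zero]; exact h)
      · rintro rfl
        rw [AddChar.mulShift_zero, AddChar.one_eq_zero]
    rw [h0, AddChar.sum_eq_ite]
    simp [heq, ZMod.card]
  -- the key identity
  have key : ∀ η : DirichletCharacter ℂ (p ^ a),
      (∀ u : ℤ, η (((1 + (p : ℤ) ^ ((a + 1) / 2) * u : ℤ) : ZMod (p ^ a))) =
        ZMod.stdAddChar ((v : ZMod (p ^ (a / 2))) * (u : ZMod (p ^ (a / 2))))) →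
      gaussSum η ZMod.stdAddChar =
        ∑ x : ZMod (p ^ a), if π x = -(v : ZMod (p ^ (a / 2)))
          then η x * ZMod.stdAddChar x else 0 := by
    intro η hη
    have hcast : ((p ^ (a / 2) : ℕ) : ℂ) ≠ 0 := Nat.cast_ne_zero.mpr (pow_ne_zero _ hp.ne_zero)
    apply mul_left_cancel₀ hcast
    have hterm : ∀ (u : ZMod (p ^ (a / 2))) (x : ZMod (p ^ a)),
        η (x * (Uof ((u.val : ℕ) : ZMod (p ^ a)) : ZMod (p ^ a))) *
          ZMod.stdAddChar (x * (Uof ((u.val : ℕ) : ZMod (p ^ a)) : ZMod (p ^ a))) =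
        η x * ZMod.stdAddChar x *
          ZMod.stdAddChar ((π x + (v : ZMod (p ^ (a / 2)))) * u) := by
      intro u x
      set t : ZMod (p ^ a) := ((u.val : ℕ) : ZMod (p ^ a)) with ht
      have huk : ((u.val : ℕ) : ZMod (p ^ (a / 2))) = u := ZMod.natCast_zmod_val u
      have h1 : η ((Uof t : ZMod (p ^ a))) =
          ZMod.stdAddChar ((v : ZMod (p ^ (a / 2))) * u) := by
        have h := hη (u.val : ℤ)
        rw [show (((1 + (p : ℤ) ^ ((a + 1) / 2) * (u.val : ℤ) : ℤ)) : ZMod (p ^ a))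
            = (Uof t : ZMod (p ^ a)) by rw [hUval]; push_cast; ring] at h
        rwa [show (((u.val : ℤ)) : ZMod (p ^ (a / 2))) = u by
          rw [Int.cast_natCast, huk]] at h
      have hπt : π t = u := by rw [ht, map_natCast, huk]
      have h2 : ZMod.stdAddChar (x * (Uof t : ZMod (p ^ a))) =
          ZMod.stdAddChar x * ZMod.stdAddChar (π x * u) := by
        rw [hUval, show x * (1 + (p : ZMod (p ^ a)) ^ ((a + 1) / 2) * t)
            = x + (p : ZMod (p ^ a)) ^ ((a + 1) / 2) * (x * t) by ring,
          AddChar.map_add_eq_mul, hstd, map_mul, hπt]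
      have h3 : ZMod.stdAddChar ((π x + (v : ZMod (p ^ (a / 2)))) * u) =
          ZMod.stdAddChar ((v : ZMod (p ^ (a / 2))) * u) * ZMod.stdAddChar (π x * u) := by
        rw [show (π x + (v : ZMod (p ^ (a / 2)))) * u
            = (v : ZMod (p ^ (a / 2))) * u + π x * u by ring, AddChar.map_add_eq_mul]
      rw [map_mul η, h1, h2, h3]
      ring
    calc ((p ^ (a / 2) : ℕ) : ℂ) * gaussSum η ZMod.stdAddChar
        = ∑ _u : ZMod (p ^ (a / 2)), gaussSum η ZMod.stdAddChar := by
          rw [Finset.sum_const, Finset.card_univ, ZMod.card, nsmul_eq_mul]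
      _ = ∑ u : ZMod (p ^ (a / 2)), ∑ x : ZMod (p ^ a),
            η (x * (Uof ((u.val : ℕ) : ZMod (p ^ a)) : ZMod (p ^ a))) *
              ZMod.stdAddChar (x * (Uof ((u.val : ℕ) : ZMod (p ^ a)) : ZMod (p ^ a))) := by
          refine Finset.sum_congr rfl fun u _ => ?_
          exact (Fintype.sum_bijective
            (· * (Uof ((u.val : ℕ) : ZMod (p ^ a)) : ZMod (p ^ a)))
            (IsUnit.isUnit_iff_mulRight_bijective.mp (Uof _).isUnit)
            (fun x => η (x * (Uof ((u.val : ℕ) : ZMod (p ^ a)) : ZMod (p ^ a))) *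
              ZMod.stdAddChar (x * (Uof ((u.val : ℕ) : ZMod (p ^ a)) : ZMod (p ^ a))))
            (fun x => η x * ZMod.stdAddChar x) fun x => rfl).symm
      _ = ∑ x : ZMod (p ^ a), ∑ u : ZMod (p ^ (a / 2)),
            η x * ZMod.stdAddChar x *
              ZMod.stdAddChar ((π x + (v : ZMod (p ^ (a / 2)))) * u) := by
          rw [Finset.sum_comm]
          exact Finset.sum_congr rfl fun x _ =>
            Finset.sum_congr rfl fun u _ => hterm u x
      _ = ∑ x : ZMod (p ^ a), η x * ZMod.stdAddChar x *
            (if π x + (v : ZMod (p ^ (a / 2))) = 0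
              then ((p ^ (a / 2) : ℕ) : ℂ) else 0) := by
          refine Finset.sum_congr rfl fun x _ => ?_
          rw [← Finset.mul_sum, hsum]
      _ = ((p ^ (a / 2) : ℕ) : ℂ) * ∑ x : ZMod (p ^ a),
            if π x = -(v : ZMod (p ^ (a / 2))) then η x * ZMod.stdAddChar x else 0 := by
          rw [Finset.mul_sum]
          refine Finset.sum_congr rfl fun x _ => ?_
          by_cases h : π x = -(v : ZMod (p ^ (a / 2)))
          · have h' : π x + (v : ZMod (p ^ (a / 2))) = 0 := by rw [h]; ring
            rw [if_pos h', if_pos h]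
            ring
          · have h' : ¬(π x + (v : ZMod (p ^ (a / 2))) = 0) := fun hc =>
              h (by linear_combination hc)
            simp [h, h']
  -- the lifted character is trivial on 1 + p^((a+1)/2) * _
  set μ' := DirichletCharacter.changeLevel
      (pow_dvd_pow p (hb.trans (Nat.div_le_self a 2))) μ with hμ'
  have hpb : (p : ZMod (p ^ b)) ^ ((a + 1) / 2) = 0 := by
    rw [← Nat.cast_pow, ZMod.natCast_eq_zero_iff]
    exact pow_dvd_pow p hbm
  have hμU : ∀ w : ZMod (p ^ a), μ' ((Uof w : ZMod (p ^ a))) = 1 := by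
    intro w
    rw [hμ', DirichletCharacter.changeLevel_eq_cast_of_dvd μ _ (Uof w)]
    have h1 : ZMod.cast ((Uof w : ZMod (p ^ a))) =
        ZMod.castHom (pow_dvd_pow p (hb.trans (Nat.div_le_self a 2))) (ZMod (p ^ b))
          ((Uof w : ZMod (p ^ a))) := (ZMod.castHom_apply _).symm
    rw [h1, hUval, map_add, map_one, map_mul, map_pow, map_natCast, hpb, zero_mul,
      add_zero, map_one]
  -- χ·μ' satisfies the same hypothesis
  have hη' : ∀ u : ℤ,
      (χ * μ') (((1 + (p : ℤ) ^ ((a + 1) / 2) * u : ℤ) : ZMod (p ^ a))) =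
      ZMod.stdAddChar ((v : ZMod (p ^ (a / 2))) * (u : ZMod (p ^ (a / 2)))) := by
    intro u
    have hcoe : (((1 + (p : ℤ) ^ ((a + 1) / 2) * u : ℤ)) : ZMod (p ^ a))
        = (Uof ((u : ℤ) : ZMod (p ^ a)) : ZMod (p ^ a)) := by
      rw [hUval]; push_cast; ring
    rw [MulChar.mul_apply, hcoe, ← hcoe, hv u, hcoe, hμU, mul_one]
  rw [key _ hη', key χ hv, Finset.mul_sum]
  refine Finset.sum_congr rfl fun x _ => ?_
  by_cases hc : π x = -(v : ZMod (p ^ (a / 2)))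
  · simp only [hc, if_true]
    rw [MulChar.mul_apply]
    by_cases hx : IsUnit x
    · obtain ⟨xu, rfl⟩ := hx
      have hμx : μ' (xu : ZMod (p ^ a)) =
          μ (-(ZMod.castHom (pow_dvd_pow p hb) (ZMod (p ^ b))
            (v : ZMod (p ^ (a / 2))))) := by
        rw [hμ', DirichletCharacter.changeLevel_eq_cast_of_dvd μ _ xu]
        have h1 : ZMod.cast ((xu : ZMod (p ^ a))) =
            ZMod.castHom (pow_dvd_pow p (hb.trans (Nat.div_le_self a 2))) (ZMod (p ^ b))
              ((xu : ZMod (p ^ a))) := (ZMod.castHom_apply _).symm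
        rw [h1]
        have h2 : ZMod.castHom (pow_dvd_pow p (hb.trans (Nat.div_le_self a 2)))
            (ZMod (p ^ b)) ((xu : ZMod (p ^ a)))
            = ZMod.castHom (pow_dvd_pow p hb) (ZMod (p ^ b)) (π (xu : ZMod (p ^ a))) := by
          rw [hπ, ← RingHom.comp_apply, ZMod.castHom_comp]
        rw [h2, hc, map_neg]
      rw [hμx]
      ring
    · rw [MulChar.map_nonunit χ hx]
      ring
  · simp [hc]
end

section
/- Let p be a prime, t ≥ 1 and m ≥ 1 integers, and let y ∈ (ZMod (p^t))ˣ. Then the sum over ALL Dirichlet characters χ modulo p^t of χ(y)⁻¹ times the m-th power of their Gauss sums equals φ(p^t) times a hyper-Kloosterman sum: Σ_{χ} χ(y)⁻¹·τ(χ)^m = φ(p^t) · Σ_{(x₁,…,x_m) ∈ ((ZMod (p^t))ˣ)^m, x₁·x₂⋯x_m = y} e_{p^t}(x₁ + x₂ + … + x_m), where φ is Euler's totient function. (This is the identity of Duke–Iwaniec expressing hyper-Kloosterman sums as sums of powers of GL(1) ε-factors.) -/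
/-!
Since a multiplicative character vanishes off the units, `τ(χ)^m` expands as a sum over
`m`-tuples of units `x` of `χ(x₁⋯x_m) e(x₁ + ⋯ + x_m)`. Summing `χ(y)⁻¹ χ(x₁⋯x_m)` over all
Dirichlet characters picks out, by orthogonality, exactly the tuples with `x₁⋯x_m = y`, each
with weight `φ(p^t)`.
-/

open Finset

lemma AddChar.map_sum_eq_prod {A M ι : Type*} [AddCommMonoid A] [CommMonoid M]
    (ψ : AddChar A M) (s : Finset ι) (f : ι → A) :
    ψ (∑ i ∈ s, f i) = ∏ i ∈ s, ψ (f i) :=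
  map_prod ψ.toMonoidHom (fun i ↦ Multiplicative.ofAdd (f i)) s

section GaussSum

variable {R R' : Type*} [CommRing R] [Fintype R] [CommRing R']

lemma gaussSum_eq_sum_units [Fintype Rˣ] (χ : MulChar R R') (ψ : AddChar R R') :
    gaussSum χ ψ = ∑ u : Rˣ, χ u * ψ u :=
  (Fintype.sum_of_injective _ Units.val_injective _ _
    (fun a ha ↦ by rw [MulChar.map_nonunit χ fun h ↦ ha ⟨h.unit, rfl⟩, zero_mul])
    fun _ ↦ rfl).symm

lemma gaussSum_pow_eq_sum_units [Fintype Rˣ] (χ : MulChar R R') (ψ : AddChar R R') (m : ℕ) :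
    gaussSum χ ψ ^ m = ∑ x : Fin m → Rˣ, χ ↑(∏ i, x i) * ψ (∑ i, (x i : R)) := by
  rw [gaussSum_eq_sum_units, Fintype.sum_pow]
  refine sum_congr rfl fun x _ ↦ ?_
  rw [prod_mul_distrib, Units.coe_prod, map_prod, ψ.map_sum_eq_prod]

end GaussSum

lemma DirichletCharacter.sum_inv_apply_mul_apply_units {R : Type*} [Field R] {n : ℕ} [NeZero n]
    [HasEnoughRootsOfUnity R (Monoid.exponent (ZMod n)ˣ)] (y u : (ZMod n)ˣ) :
    ∑ χ : DirichletCharacter R n, (χ y)⁻¹ * χ u = if y = u then (n.totient : R) else 0 := by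
  have inv_apply_eq (χ : DirichletCharacter R n) : (χ y)⁻¹ = χ (y : ZMod n)⁻¹ :=
    inv_eq_of_mul_eq_one_left <| by rw [← map_mul, ZMod.inv_mul_of_unit _ y.isUnit, map_one]
  simp only [inv_apply_eq, sum_char_inv_mul_char_eq R y.isUnit, Units.val_inj]

theorem sum_char_gauss_pow_eq_kloosterman_general (p : ℕ) [Fact p.Prime] (t : ℕ)
    (m : ℕ) (y : (ZMod (p ^ t))ˣ) :
    ∑ χ : DirichletCharacter ℂ (p ^ t),
        (χ (y : ZMod (p ^ t)))⁻¹ * (gaussSum χ ZMod.stdAddChar) ^ m =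
      (Nat.totient (p ^ t) : ℂ) *
        ∑ x ∈ univ.filter (fun x : Fin m → (ZMod (p ^ t))ˣ => ∏ i, x i = y),
          ZMod.stdAddChar (∑ i, (x i : ZMod (p ^ t))) := by
  set ψ : AddChar (ZMod (p ^ t)) ℂ := ZMod.stdAddChar
  calc _ = ∑ χ : DirichletCharacter ℂ (p ^ t), ∑ x : Fin m → (ZMod (p ^ t))ˣ,
        (χ y)⁻¹ * (χ ↑(∏ i, x i) * ψ (∑ i, (x i : ZMod (p ^ t)))) := by
        simp only [gaussSum_pow_eq_sum_units, mul_sum]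
    _ = ∑ x : Fin m → (ZMod (p ^ t))ˣ, ψ (∑ i, (x i : ZMod (p ^ t))) *
        ∑ χ : DirichletCharacter ℂ (p ^ t), (χ y)⁻¹ * χ ↑(∏ i, x i) := by
        rw [sum_comm]
        exact sum_congr rfl fun x _ ↦ by rw [mul_sum]; exact sum_congr rfl fun χ _ ↦ by ring
    _ = _ := by
        simp only [DirichletCharacter.sum_inv_apply_mul_apply_units, mul_ite, mul_zero]
        rw [mul_sum, sum_filter]
        exact sum_congr rfl fun x _ ↦ by rw [mul_comm]; exact if_congr eq_comm rfl rfl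

open Finset in
/-- Duke–Iwaniec identity: for `y` a unit mod `p^t`, the sum over all Dirichlet characters `χ`
mod `p^t` of `χ(y)⁻¹ τ(χ)^m` equals `φ(p^t)` times the `m`-dimensional hyper-Kloosterman sum
at `y` mod `p^t`. -/
theorem sum_char_gauss_pow_eq_kloosterman (p : ℕ) [Fact p.Prime] (t : ℕ) (ht : 1 ≤ t)
    (m : ℕ) (hm : 1 ≤ m) (y : (ZMod (p ^ t))ˣ) :
    ∑ χ : DirichletCharacter ℂ (p ^ t),
        (χ (y : ZMod (p ^ t)))⁻¹ * (gaussSum χ ZMod.stdAddChar) ^ m =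
      (Nat.totient (p ^ t) : ℂ) *
        ∑ x ∈ univ.filter (fun x : Fin m → (ZMod (p ^ t))ˣ => ∏ i, x i = y),
          ZMod.stdAddChar (∑ i, (x i : ZMod (p ^ t))) :=
  sum_char_gauss_pow_eq_kloosterman_general p t m y
end

section
/- Let p be a prime, t ≥ 2 and m ≥ 1 integers, and let y ∈ (ZMod (p^t))ˣ. Then the sum restricted to PRIMITIVE Dirichlet characters modulo p^t satisfies Σ_{χ primitive mod p^t} χ(y)⁻¹·τ(χ)^m = φ(p^t) · Σ_{(x₁,…,x_m) ∈ ((ZMod (p^t))ˣ)^m, x₁·x₂⋯x_m = y} e_{p^t}(x₁ + x₂ + … + x_m), where φ is Euler's totient function. (Since Gauss sums of imprimitive characters modulo p^t vanish for t ≥ 2, the restriction to characters of conductor exactly p^t can be relaxed, yielding the hyper-Kloosterman sum.) -/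
open Finset

section aux

variable {p : ℕ} [hp : Fact p.Prime]

private lemma DW_addChar_sum {A M : Type*} [AddCommMonoid A] [CommMonoid M] (ψ : AddChar A M)
    {ι : Type*} (s : Finset ι) (f : ι → A) : ψ (∑ i ∈ s, f i) = ∏ i ∈ s, ψ (f i) := by
  classical
  induction s using Finset.cons_induction with
  | empty => simp
  | cons a s ha ih => rw [Finset.sum_cons, Finset.prod_cons, AddChar.map_add_eq_mul, ih]

private lemma DW_isUnit_iff {s : ℕ} (hs : s ≠ 0) (x : ZMod (p ^ s)) :
    IsUnit x ↔ ¬ p ∣ x.val := by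
  haveI : NeZero (p ^ s) := ⟨pow_ne_zero _ hp.out.ne_zero⟩
  conv_lhs => rw [← ZMod.natCast_zmod_val x]
  rw [ZMod.isUnit_iff_coprime, Nat.coprime_pow_right_iff (Nat.pos_of_ne_zero hs),
    Nat.coprime_comm]
  exact hp.out.coprime_iff_not_dvd

private lemma DW_gaussSum_eq_zero {t : ℕ} (ht : 2 ≤ t)
    (χ : DirichletCharacter ℂ (p ^ t)) (hχ : ¬ χ.IsPrimitive) :
    gaussSum χ ZMod.stdAddChar = 0 := by
  haveI : NeZero (p ^ t) := ⟨pow_ne_zero _ hp.out.ne_zero⟩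
  haveI : NeZero (p ^ (t - 1)) := ⟨pow_ne_zero _ hp.out.ne_zero⟩
  set q : ℕ := p ^ (t - 1) with hq
  have hqp : q * p = p ^ t := by rw [hq, ← pow_succ]; congr 1; omega
  obtain ⟨k, hk, hcond⟩ := (Nat.dvd_prime_pow hp.out).mp χ.conductor_dvd_level
  have hkt : k ≠ t := fun h => hχ (by rw [DirichletCharacter.IsPrimitive, hcond, h])
  have hcd : χ.conductor ∣ q := hcond ▸ pow_dvd_pow p (by omega)
  have hdvd : q ∣ p ^ t := ⟨p, hqp.symm⟩
  set ψ : DirichletCharacter ℂ q :=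
    DirichletCharacter.changeLevel hcd (χ.factorsThrough_conductor).χ₀ with hψ
  have hχψ : χ = DirichletCharacter.changeLevel hdvd ψ := by
    rw [hψ, ← DirichletCharacter.changeLevel_trans _ hcd hdvd]
    exact (χ.factorsThrough_conductor).eq_changeLevel
  have key : ∀ x : ZMod (p ^ t), χ x = ψ ((x.val : ZMod q)) := by
    intro x
    by_cases hx : IsUnit x
    · obtain ⟨u, rfl⟩ := hx
      rw [hχψ, DirichletCharacter.changeLevel_eq_cast_of_dvd, ZMod.natCast_val]
    · have h1 : p ∣ x.val := by
        by_contra h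
        exact hx ((DW_isUnit_iff (by omega) x).mpr h)
      have h2 : ¬ IsUnit ((x.val : ZMod q)) := by
        intro h
        rw [ZMod.isUnit_iff_coprime, hq,
          Nat.coprime_pow_right_iff (by omega : 0 < t - 1), Nat.coprime_comm] at h
        exact (hp.out.coprime_iff_not_dvd.mp h) h1
      rw [MulChar.map_nonunit χ hx, MulChar.map_nonunit ψ h2]
  set F : ZMod q × ZMod p → ZMod (p ^ t) :=
    fun ac => ((ac.1.val + q * ac.2.val : ℕ) : ZMod (p ^ t)) with hF
  have hbound : ∀ ac : ZMod q × ZMod p, ac.1.val + q * ac.2.val < p ^ t := by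
    intro ac
    have h1 : ac.1.val < q := ZMod.val_lt _
    have h2 : ac.2.val < p := ZMod.val_lt _
    calc ac.1.val + q * ac.2.val < q + q * ac.2.val := by omega
    _ = q * (ac.2.val + 1) := by ring
    _ ≤ q * p := Nat.mul_le_mul_left _ (by omega)
    _ = p ^ t := hqp
  have hval : ∀ ac : ZMod q × ZMod p, (F ac).val = ac.1.val + q * ac.2.val :=
    fun ac => ZMod.val_cast_of_lt (hbound ac)
  have hqpos : 0 < q := pow_pos hp.out.pos _
  have hFinj : Function.Injective F := by
    intro ac ac' h
    have h' := congrArg ZMod.val h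
    rw [hval, hval] at h'
    have e1 : ac.1.val = ac'.1.val := by
      have := congrArg (· % q) h'
      simpa [Nat.add_mul_mod_self_left, Nat.mod_eq_of_lt (ZMod.val_lt _)] using this
    have e2 : ac.2.val = ac'.2.val := by
      have hq0 : q ≠ 0 := hqpos.ne'
      nlinarith [h', e1]
    exact Prod.ext (ZMod.val_injective _ e1) (ZMod.val_injective _ e2)
  have hFbij : Function.Bijective F := by
    refine (Fintype.bijective_iff_injective_and_card F).mpr ⟨hFinj, ?_⟩
    simp [ZMod.card, ← hqp]
  have hsum : gaussSum χ ZMod.stdAddChar =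
      ∑ ac : ZMod q × ZMod p, χ (F ac) * ZMod.stdAddChar (F ac) :=
    (Fintype.sum_bijective F hFbij _ _ fun ac => rfl).symm
  set ζ : ℂ := ZMod.stdAddChar ((q : ZMod (p ^ t))) with hζ
  have hζp : ζ ^ p = 1 := by
    rw [hζ, ← AddChar.map_nsmul_eq_pow, nsmul_eq_mul, ← Nat.cast_mul, mul_comm,
      hqp, ZMod.natCast_self, AddChar.map_zero_eq_one]
  have hζ1 : ζ ≠ 1 := by
    rw [hζ, ← AddChar.map_zero_eq_one (ZMod.stdAddChar (N := p ^ t))]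
    intro h
    have h0 := ZMod.injective_stdAddChar h
    rw [ZMod.natCast_eq_zero_iff] at h0
    have := (Nat.pow_dvd_pow_iff_le_right hp.out.one_lt).mp h0
    omega
  have hgeom : ∑ c : ZMod p, ζ ^ c.val = 0 := by
    have hrange : ∑ c : ZMod p, ζ ^ c.val = ∑ i ∈ range p, ζ ^ i := by
      refine Finset.sum_nbij' (fun c => c.val) (fun i => (i : ZMod p)) ?_ ?_ ?_ ?_ ?_
      · exact fun c _ => mem_range.mpr (ZMod.val_lt c)
      · exact fun i _ => mem_univ _
      · exact fun c _ => ZMod.natCast_zmod_val c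
      · intro i hi
        show ((i : ZMod p)).val = i
        rw [ZMod.val_natCast, Nat.mod_eq_of_lt (mem_range.mp hi)]
      · exact fun c _ => rfl
    rw [hrange, geom_sum_eq hζ1, hζp, sub_self, zero_div]
  rw [hsum]
  have hterm : ∀ ac : ZMod q × ZMod p, χ (F ac) * ZMod.stdAddChar (F ac) =
      (ψ ac.1 * ZMod.stdAddChar ((ac.1.val : ZMod (p ^ t)))) * ζ ^ ac.2.val := by
    intro ac
    have hFsplit : F ac = ((ac.1.val : ZMod (p ^ t))) + ac.2.val • ((q : ZMod (p ^ t))) := by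
      rw [hF]
      push_cast
      rw [nsmul_eq_mul]
      ring
    have hχF : χ (F ac) = ψ ac.1 := by
      rw [key, hval]
      congr 1
      push_cast
      rw [ZMod.natCast_self, zero_mul, add_zero, ZMod.natCast_zmod_val]
    rw [hχF, hFsplit, AddChar.map_add_eq_mul, AddChar.map_nsmul_eq_pow, mul_assoc, hζ]
  simp_rw [hterm]
  rw [Fintype.sum_prod_type]
  simp_rw [← Finset.mul_sum, hgeom, mul_zero]
  exact Finset.sum_const_zero

end aux

open Finset in
open scoped Classical in
/-- For `t ≥ 2` the Duke–Iwaniec identity holds with the character sum restricted to primitive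
Dirichlet characters mod `p^t` (Gauss sums of imprimitive characters vanish):
`∑_{χ primitive} χ(y)⁻¹ τ(χ)^m = φ(p^t) · Kl_m(y; p^t)`. -/
theorem sum_primitive_char_gauss_pow_eq_kloosterman (p : ℕ) [Fact p.Prime] (t : ℕ)
    (ht : 2 ≤ t) (m : ℕ) (hm : 1 ≤ m) (y : (ZMod (p ^ t))ˣ) :
    ∑ χ ∈ univ.filter (fun χ : DirichletCharacter ℂ (p ^ t) => χ.IsPrimitive),
        (χ (y : ZMod (p ^ t)))⁻¹ * (gaussSum χ ZMod.stdAddChar) ^ m =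
      (Nat.totient (p ^ t) : ℂ) *
        ∑ x ∈ univ.filter (fun x : Fin m → (ZMod (p ^ t))ˣ => ∏ i, x i = y),
          ZMod.stdAddChar (∑ i, (x i : ZMod (p ^ t))) := by
  haveI : NeZero (p ^ t) := ⟨pow_ne_zero _ (Fact.out : p.Prime).ne_zero⟩
  -- Step 1: extend to all characters
  rw [show (∑ χ ∈ univ.filter (fun χ : DirichletCharacter ℂ (p ^ t) => χ.IsPrimitive),
        (χ (y : ZMod (p ^ t)))⁻¹ * (gaussSum χ ZMod.stdAddChar) ^ m) =
      ∑ χ : DirichletCharacter ℂ (p ^ t),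
        (χ (y : ZMod (p ^ t)))⁻¹ * (gaussSum χ ZMod.stdAddChar) ^ m from
    Finset.sum_subset (filter_subset _ _) (fun χ _ hχ => by
      rw [DW_gaussSum_eq_zero ht χ (by simpa using hχ), zero_pow (by omega : m ≠ 0), mul_zero])]
  -- Step 2: expand the Gauss sum power
  have hexpand : ∀ χ : DirichletCharacter ℂ (p ^ t), (gaussSum χ ZMod.stdAddChar) ^ m
      = ∑ x : Fin m → ZMod (p ^ t),
          χ (∏ i, x i) * ZMod.stdAddChar (∑ i, (x i)) := by
    intro χ
    have h1 : (gaussSum χ ZMod.stdAddChar) ^ m = ∏ _i : Fin m, gaussSum χ ZMod.stdAddChar := by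
      rw [Finset.prod_const, card_univ, Fintype.card_fin]
    rw [h1]
    unfold gaussSum
    rw [Finset.prod_univ_sum]
    rw [Fintype.piFinset_univ]
    refine Finset.sum_congr rfl fun x _ => ?_
    rw [Finset.prod_mul_distrib, ← map_prod χ, DW_addChar_sum]
  simp_rw [hexpand, Finset.mul_sum]
  rw [Finset.sum_comm]
  have hinv : ∀ χ : DirichletCharacter ℂ (p ^ t),
      (χ (y : ZMod (p ^ t)))⁻¹ = χ (((y : ZMod (p ^ t)))⁻¹) := by
    intro χ
    refine inv_eq_of_mul_eq_one_right ?_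
    rw [← map_mul, ZMod.mul_inv_of_unit _ y.isUnit, map_one]
  have hx : ∀ x : Fin m → ZMod (p ^ t),
      (∑ χ : DirichletCharacter ℂ (p ^ t),
        (χ (y : ZMod (p ^ t)))⁻¹ * (χ (∏ i, x i) * ZMod.stdAddChar (∑ i, (x i)))) =
      (if (y : ZMod (p ^ t)) = ∏ i, x i then (Nat.totient (p ^ t) : ℂ) else 0) *
        ZMod.stdAddChar (∑ i, (x i)) := by
    intro x
    simp_rw [← mul_assoc]
    rw [← Finset.sum_mul]
    congr 1
    simp_rw [hinv]
    exact DirichletCharacter.sum_char_inv_mul_char_eq ℂ y.isUnit (∏ i, x i)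
  simp_rw [hx, ite_mul, zero_mul]
  rw [← Finset.sum_filter, ← Finset.mul_sum]
  -- Step 3: the bijection between ZMod tuples with given product and unit tuples
  have hall : ∀ (x : Fin m → ZMod (p ^ t)), IsUnit (∏ i, x i) → ∀ k, IsUnit (x k) := by
    intro x h k
    rw [← Finset.mul_prod_erase univ x (mem_univ k)] at h
    exact isUnit_of_mul_isUnit_left h
  have himg : (univ.filter (fun u : Fin m → (ZMod (p ^ t))ˣ => ∏ i, u i = y)).image
      (fun u k => ((u k : (ZMod (p ^ t))ˣ) : ZMod (p ^ t))) =
      univ.filter (fun x : Fin m → ZMod (p ^ t) => (y : ZMod (p ^ t)) = ∏ i, x i) := by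
    ext x
    simp only [mem_image, mem_filter, mem_univ, true_and]
    constructor
    · rintro ⟨u, hu, rfl⟩
      rw [← Units.coe_prod, hu]
    · intro hx
      have hk := hall x (by rw [← hx]; exact y.isUnit)
      refine ⟨fun k => (hk k).unit, ?_, ?_⟩
      · refine Units.ext ?_
        rw [Units.coe_prod]
        simp only [IsUnit.unit_spec]
        exact hx.symm
      · funext k
        exact (hk k).unit_spec
  rw [← himg, Finset.sum_image (fun u _ v _ h => ?_)]
  · rw [Finset.mul_sum]
  · funext k
    exact Units.ext (congrFun h k)
end

section
/- Let p be a prime, t ≥ 2 and n ≥ 2 integers, and let w ∈ (ZMod (p^t))ˣ. Then Σ_{χ primitive mod p^t} χ(w)·τ(χ)·τ(χ⁻¹)^n = p^t · φ(p^t) · Σ_{(x₁,…,x_{n−1}) ∈ ((ZMod (p^t))ˣ)^(n−1), x₁·x₂⋯x_{n−1} = −w} e_{p^t}(x₁ + x₂ + … + x_{n−1}), where the sum on the left runs over all primitive Dirichlet characters modulo p^t and φ is Euler's totient function. (This is the finite arithmetic content of the computation of the Bessel transform of ψ(z·)·1_{𝒪ˣ} for a generic representation of GL_n with trivial central character: after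 the stability identity ε(1/2, χ·π, ψ) = ε(1/2, χ, ψ)^n, the character sum of ε-factors evaluates to an (n−1)-dimensional hyper-Kloosterman sum.) -/
open Finset DirichletCharacter

namespace SumPrimCharAux

/-- An additive character applied to a sum is the product of values. -/
lemma addChar_map_sum {A : Type*} [AddCommMonoid A] (e : AddChar A ℂ) {ι : Type*}
    (s : Finset ι) (f : ι → A) :
    e (∑ i ∈ s, f i) = ∏ i ∈ s, e (f i) := by
  classical
  induction s using Finset.cons_induction with
  | empty => simp
  | cons a s ha ih => rw [Finset.sum_cons, Finset.prod_cons, AddChar.map_add_eq_mul, ih]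

/-- A sum over `ZMod N` of a function vanishing on non-units is a sum over units. -/
lemma sum_eq_sum_units {N : ℕ} [NeZero N] (f : ZMod N → ℂ)
    (h : ∀ x : ZMod N, ¬IsUnit x → f x = 0) :
    ∑ x : ZMod N, f x = ∑ u : (ZMod N)ˣ, f u := by
  classical
  rw [← Finset.sum_filter_of_ne (p := fun x : ZMod N => IsUnit x)
    (fun x _ hx => by_contra fun hu => hx (h x hu))]
  refine (Finset.sum_bij (fun (u : (ZMod N)ˣ) _ => (u : ZMod N)) ?_ ?_ ?_ ?_).symm
  · intro u _
    exact Finset.mem_filter.mpr ⟨Finset.mem_univ _, u.isUnit⟩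
  · intro u _ v _ huv
    exact Units.ext huv
  · intro x hx
    obtain ⟨-, hx⟩ := Finset.mem_filter.mp hx
    exact ⟨hx.unit, Finset.mem_univ _, hx.unit_spec⟩
  · intro u _
    rfl

/-- For a primitive character, `τ(χ) τ(χ⁻¹) = χ(-1) N`. -/
lemma gauss_pair {N : ℕ} [NeZero N] {χ : DirichletCharacter ℂ N} (hχ : χ.IsPrimitive) :
    gaussSum χ ZMod.stdAddChar * gaussSum χ⁻¹ ZMod.stdAddChar = χ (-1) * N := by
  classical
  have hprim := ZMod.isPrimitive_stdAddChar N
  calc gaussSum χ ZMod.stdAddChar * gaussSum χ⁻¹ ZMod.stdAddChar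
      = ∑ y : ZMod N, gaussSum χ (ZMod.stdAddChar.mulShift y) * ZMod.stdAddChar y := by
        have expand : gaussSum χ⁻¹ ZMod.stdAddChar
            = ∑ y : ZMod N, χ⁻¹ y * ZMod.stdAddChar y := rfl
        rw [expand, Finset.mul_sum]
        refine Finset.sum_congr rfl fun y _ => ?_
        rw [gaussSum_mulShift_of_isPrimitive _ hχ]
        ring
    _ = ∑ y : ZMod N, ∑ x : ZMod N, χ x * ZMod.stdAddChar (y * (x + 1)) := by
        refine Finset.sum_congr rfl fun y _ => ?_
        rw [gaussSum, Finset.sum_mul]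
        refine Finset.sum_congr rfl fun x _ => ?_
        rw [AddChar.mulShift_apply, mul_assoc, ← AddChar.map_add_eq_mul, mul_add, mul_one]
    _ = ∑ x : ZMod N, χ x * ∑ y : ZMod N, ZMod.stdAddChar (y * (x + 1)) := by
        rw [Finset.sum_comm]
        exact Finset.sum_congr rfl fun x _ => (Finset.mul_sum _ _ _).symm
    _ = ∑ x : ZMod N, χ x * (if x + 1 = 0 then ((Fintype.card (ZMod N) : ℂ)) else 0) := by
        refine Finset.sum_congr rfl fun x _ => ?_
        rw [AddChar.sum_mulShift _ hprim]
        simp [apply_ite (Nat.cast : ℕ → ℂ)]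
    _ = χ (-1) * N := by
        rw [Finset.sum_eq_single_of_mem (-1 : ZMod N) (Finset.mem_univ _)]
        · rw [if_pos (by ring), ZMod.card]
        · intro x _ hx
          rw [if_neg (fun h => hx (by linear_combination h)), mul_zero]

/-- Expansion of a power of a Gauss sum as a sum over tuples of units. -/
lemma gauss_pow {N : ℕ} [NeZero N] (χ : DirichletCharacter ℂ N) (m : ℕ) :
    gaussSum χ⁻¹ ZMod.stdAddChar ^ m
      = ∑ g : Fin m → (ZMod N)ˣ,
          χ⁻¹ ((∏ i, g i : (ZMod N)ˣ) : ZMod N) *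
            ZMod.stdAddChar (∑ i, ((g i : ZMod N))) := by
  classical
  have h0 : gaussSum χ⁻¹ ZMod.stdAddChar
      = ∑ u : (ZMod N)ˣ, χ⁻¹ (u : ZMod N) * ZMod.stdAddChar (u : ZMod N) := by
    rw [gaussSum]
    exact sum_eq_sum_units _ fun x hx => by rw [MulChar.map_nonunit _ hx, zero_mul]
  rw [h0, Fintype.sum_pow]
  refine Finset.sum_congr rfl fun g _ => ?_
  rw [Finset.prod_mul_distrib, addChar_map_sum]
  congr 1
  rw [← map_prod χ⁻¹]
  congr 1
  push_cast
  rfl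

open scoped Classical in
/-- The sum of the standard additive character over a fiber of `ZMod q → ZMod b`, for a
proper divisor `b` of `q`, vanishes. -/
lemma fiber_sum_zero {q b : ℕ} [NeZero q] [NeZero b] (hbq : b ∣ q) (hlt : b < q)
    (d : ZMod b) :
    ∑ x ∈ univ.filter (fun x : ZMod q => ZMod.castHom hbq (ZMod b) x = d),
      ZMod.stdAddChar x = 0 := by
  classical
  have hb : 0 < b := Nat.pos_of_ne_zero (NeZero.ne b)
  obtain ⟨a, hab⟩ := id hbq
  have ha : 1 < a := by
    rcases Nat.lt_or_ge a 2 with h | h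
    · interval_cases a <;> omega
    · omega
  set x₀ : ZMod q := ((d.val : ℕ) : ZMod q) with hx₀
  have hcast_x₀ : ZMod.castHom hbq (ZMod b) x₀ = d := by
    rw [hx₀, map_natCast, ZMod.natCast_zmod_val]
  have key : ∑ j ∈ Finset.range a, ZMod.stdAddChar (x₀ + ((b * j : ℕ) : ZMod q))
      = ∑ x ∈ univ.filter (fun x : ZMod q => ZMod.castHom hbq (ZMod b) x = d),
        ZMod.stdAddChar x := by
    refine Finset.sum_nbij' (fun j => x₀ + ((b * j : ℕ) : ZMod q))
      (fun x => (x - x₀).val / b) ?_ ?_ ?_ ?_ ?_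
    · intro j _
      refine Finset.mem_filter.mpr ⟨Finset.mem_univ _, ?_⟩
      rw [map_add, hcast_x₀, map_natCast]
      have : ((b * j : ℕ) : ZMod b) = 0 := by
        rw [ZMod.natCast_eq_zero_iff]
        exact Dvd.intro j rfl
      rw [this, add_zero]
    · intro x hx
      refine Finset.mem_range.mpr ?_
      have h2 : (x - x₀).val < a * b := by
        rw [← Nat.mul_comm b a, ← hab]
        exact ZMod.val_lt _
      exact (Nat.div_lt_iff_lt_mul hb).mpr h2
    · intro j hj
      have hj' : j < a := Finset.mem_range.mp hj
      show ((x₀ + ((b * j : ℕ) : ZMod q)) - x₀).val / b = j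
      have h1 : x₀ + ((b * j : ℕ) : ZMod q) - x₀ = ((b * j : ℕ) : ZMod q) := by ring
      have hlt2 : b * j < q := by
        rw [hab]
        exact (Nat.mul_lt_mul_left hb).mpr hj'
      rw [h1, ZMod.val_natCast, Nat.mod_eq_of_lt hlt2, Nat.mul_div_cancel_left _ hb]
    · intro x hx
      obtain ⟨-, hx⟩ := Finset.mem_filter.mp hx
      have hdvd : b ∣ (x - x₀).val := by
        have : ZMod.castHom hbq (ZMod b) (x - x₀) = 0 := by
          rw [map_sub, hx, hcast_x₀, sub_self]
        rwa [ZMod.castHom_apply, ← ZMod.natCast_val, ZMod.natCast_eq_zero_iff] at this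
      show x₀ + ((b * ((x - x₀).val / b) : ℕ) : ZMod q) = x
      rw [Nat.mul_div_cancel' hdvd, ZMod.natCast_zmod_val]
      ring
    · intro j _
      rfl
  rw [← key]
  have hterm : ∀ j : ℕ, ZMod.stdAddChar (x₀ + ((b * j : ℕ) : ZMod q))
      = ZMod.stdAddChar x₀ * (ZMod.stdAddChar ((b : ℕ) : ZMod q)) ^ j := by
    intro j
    rw [AddChar.map_add_eq_mul]
    congr 1
    rw [← AddChar.map_nsmul_eq_pow]
    congr 1
    push_cast
    rw [nsmul_eq_mul]
    push_cast
    ring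
  simp_rw [hterm]
  rw [← Finset.mul_sum]
  set ζ : ℂ := ZMod.stdAddChar ((b : ℕ) : ZMod q) with hζ
  have hζ_ne : ζ ≠ 1 := by
    intro h
    have h0 : ZMod.stdAddChar ((b : ℕ) : ZMod q) = ZMod.stdAddChar (0 : ZMod q) := by
      rw [AddChar.map_zero_eq_one, ← h, hζ]
    have := ZMod.injective_stdAddChar h0
    rw [ZMod.natCast_eq_zero_iff] at this
    exact absurd (Nat.le_of_dvd hb this) (not_le.mpr hlt)
  have hζa : ζ ^ a = 1 := by
    rw [hζ, ← AddChar.map_nsmul_eq_pow]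
    have : a • ((b : ℕ) : ZMod q) = ((q : ℕ) : ZMod q) := by
      rw [nsmul_eq_mul, hab]
      push_cast
      ring
    rw [this, ZMod.natCast_self, AddChar.map_zero_eq_one]
  rw [geom_sum_eq hζ_ne, hζa, sub_self, zero_div, mul_zero]

open scoped Classical in
/-- The sum of the additive character over units in a fiber of `unitsMap` vanishes
(for `t ≥ 2`). -/
lemma unit_fiber_sum_zero (p : ℕ) [Fact p.Prime] {t : ℕ} (ht : 2 ≤ t)
    (d : (ZMod (p ^ (t - 1)))ˣ) :
    ∑ x ∈ univ.filter (fun x : (ZMod (p ^ t))ˣ =>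
        ZMod.unitsMap (pow_dvd_pow p (Nat.sub_le t 1)) x = d),
      ZMod.stdAddChar (x : ZMod (p ^ t)) = 0 := by
  classical
  have hp : p.Prime := Fact.out
  haveI : NeZero (p ^ t) := ⟨pow_ne_zero t hp.ne_zero⟩
  haveI : NeZero (p ^ (t - 1)) := ⟨pow_ne_zero _ hp.ne_zero⟩
  have hdvd : p ^ (t - 1) ∣ p ^ t := pow_dvd_pow p (Nat.sub_le t 1)
  have hlt : p ^ (t - 1) < p ^ t := Nat.pow_lt_pow_right hp.one_lt (by omega)
  have hunit : ∀ x : ZMod (p ^ t), ZMod.castHom hdvd (ZMod (p ^ (t - 1))) x = (d : ZMod (p ^ (t - 1))) → IsUnit x := by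
    intro x hx
    have h1 : IsUnit (ZMod.castHom hdvd (ZMod (p ^ (t - 1))) x) := hx ▸ d.isUnit
    rw [ZMod.castHom_apply, ← ZMod.natCast_val, ZMod.isUnit_iff_coprime] at h1
    rw [← ZMod.natCast_zmod_val x, ZMod.isUnit_iff_coprime]
    exact (Nat.coprime_pow_right_iff (n := t) (by omega) _ _).mpr
      ((Nat.coprime_pow_right_iff (n := t - 1) (by omega) _ _).mp h1)
  have key : ∑ x ∈ univ.filter (fun x : (ZMod (p ^ t))ˣ =>
        ZMod.unitsMap (pow_dvd_pow p (Nat.sub_le t 1)) x = d),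
      ZMod.stdAddChar (x : ZMod (p ^ t))
      = ∑ x ∈ univ.filter (fun x : ZMod (p ^ t) =>
          ZMod.castHom hdvd (ZMod (p ^ (t - 1))) x = (d : ZMod (p ^ (t - 1)))),
        ZMod.stdAddChar x := by
    refine Finset.sum_bij (fun (u : (ZMod (p ^ t))ˣ) _ => (u : ZMod (p ^ t))) ?_ ?_ ?_ ?_
    · intro u hu
      obtain ⟨-, hu⟩ := Finset.mem_filter.mp hu
      refine Finset.mem_filter.mpr ⟨Finset.mem_univ _, ?_⟩
      exact congrArg Units.val hu
    · intro u _ v _ huv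
      exact Units.ext huv
    · intro x hx
      obtain ⟨-, hx⟩ := Finset.mem_filter.mp hx
      have hx_unit : IsUnit x := hunit x hx
      refine ⟨hx_unit.unit, Finset.mem_filter.mpr ⟨Finset.mem_univ _, ?_⟩, hx_unit.unit_spec⟩
      apply Units.ext
      show ZMod.castHom hdvd (ZMod (p ^ (t - 1))) ((hx_unit.unit : (ZMod (p ^ t))ˣ) : ZMod (p ^ t))
        = (d : ZMod (p ^ (t - 1)))
      rw [hx_unit.unit_spec]
      exact hx
    · intro u _
      rfl
  rw [key]
  exact fiber_sum_zero hdvd hlt _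

/-- Classification: non-primitive characters mod `p^t` are exactly those coming from
level `p^(t-1)`. -/
lemma not_isPrimitive_iff (p : ℕ) [Fact p.Prime] {t : ℕ} (ht : 1 ≤ t)
    (χ : DirichletCharacter ℂ (p ^ t)) :
    ¬χ.IsPrimitive ↔ ∃ χ' : DirichletCharacter ℂ (p ^ (t - 1)),
      changeLevel (pow_dvd_pow p (Nat.sub_le t 1)) χ' = χ := by
  have hp : p.Prime := Fact.out
  have hlt : p ^ (t - 1) < p ^ t := Nat.pow_lt_pow_right hp.one_lt (by omega)
  constructor
  · intro hχ
    obtain ⟨i, hi, hcond⟩ := (Nat.dvd_prime_pow hp).mp (conductor_dvd_level χ)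
    have hit : i ≠ t := fun h => hχ (by rw [IsPrimitive, hcond, h])
    have hdvd' : χ.conductor ∣ p ^ (t - 1) := hcond ▸ pow_dvd_pow p (by omega)
    refine ⟨changeLevel hdvd' (χ.factorsThrough_conductor).χ₀, ?_⟩
    rw [← changeLevel_trans _ hdvd' (pow_dvd_pow p (Nat.sub_le t 1))]
    exact ((χ.factorsThrough_conductor).eq_changeLevel).symm
  · rintro ⟨χ', rfl⟩ hprim
    have hmem : (changeLevel (pow_dvd_pow p (Nat.sub_le t 1)) χ').FactorsThrough (p ^ (t - 1)) :=
      ⟨pow_dvd_pow p (Nat.sub_le t 1), χ', rfl⟩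
    have hle : (changeLevel (pow_dvd_pow p (Nat.sub_le t 1)) χ').conductor ≤ p ^ (t - 1) :=
      Nat.sInf_le hmem
    rw [IsPrimitive] at hprim
    omega

open scoped Classical in
/-- The sum of `χ u` over primitive characters mod `p^t`. -/
lemma sum_prim_char (p : ℕ) [Fact p.Prime] {t : ℕ} (ht : 2 ≤ t) (u : (ZMod (p ^ t))ˣ) :
    ∑ χ ∈ univ.filter (fun χ : DirichletCharacter ℂ (p ^ t) => χ.IsPrimitive),
        χ (u : ZMod (p ^ t))
      = (if u = 1 then (((p ^ t).totient : ℂ)) else 0)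
        - (if ZMod.unitsMap (pow_dvd_pow p (Nat.sub_le t 1)) u = 1
            then (((p ^ (t - 1)).totient : ℂ)) else 0) := by
  classical
  have hp : p.Prime := Fact.out
  haveI : NeZero (p ^ t) := ⟨pow_ne_zero t hp.ne_zero⟩
  haveI : NeZero (p ^ (t - 1)) := ⟨pow_ne_zero _ hp.ne_zero⟩
  have htot : ∑ χ : DirichletCharacter ℂ (p ^ t), χ (u : ZMod (p ^ t))
      = if u = 1 then (((p ^ t).totient : ℂ)) else 0 := by
    rw [sum_characters_eq]
    congr 1
    rw [eq_iff_iff, Units.val_eq_one]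
  have hnonprim : ∑ χ ∈ univ.filter
        (fun χ : DirichletCharacter ℂ (p ^ t) => ¬χ.IsPrimitive), χ (u : ZMod (p ^ t))
      = if ZMod.unitsMap (pow_dvd_pow p (Nat.sub_le t 1)) u = 1
          then (((p ^ (t - 1)).totient : ℂ)) else 0 := by
    have hbij : ∑ χ ∈ univ.filter
          (fun χ : DirichletCharacter ℂ (p ^ t) => ¬χ.IsPrimitive), χ (u : ZMod (p ^ t))
        = ∑ χ' : DirichletCharacter ℂ (p ^ (t - 1)),
            χ' ((ZMod.unitsMap (pow_dvd_pow p (Nat.sub_le t 1)) u : (ZMod (p ^ (t - 1)))ˣ) :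
              ZMod (p ^ (t - 1))) := by
      refine (Finset.sum_bij
        (fun (χ' : DirichletCharacter ℂ (p ^ (t - 1))) _ =>
          changeLevel (pow_dvd_pow p (Nat.sub_le t 1)) χ') ?_ ?_ ?_ ?_).symm
      · intro χ' _
        refine Finset.mem_filter.mpr ⟨Finset.mem_univ _, ?_⟩
        rw [not_isPrimitive_iff p (by omega)]
        exact ⟨χ', rfl⟩
      · intro χ₁ _ χ₂ _ h
        exact changeLevel_injective _ h
      · intro χ hχ
        obtain ⟨-, hχ⟩ := Finset.mem_filter.mp hχ
        obtain ⟨χ', hχ'⟩ := (not_isPrimitive_iff p (by omega) χ).mp hχ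
        exact ⟨χ', Finset.mem_univ _, hχ'⟩
      · intro χ' _
        rw [changeLevel_eq_cast_of_dvd]
        rfl
    rw [hbij, sum_characters_eq]
    congr 1
    rw [eq_iff_iff, Units.val_eq_one]
  have hsplit : ∑ χ ∈ univ.filter
        (fun χ : DirichletCharacter ℂ (p ^ t) => χ.IsPrimitive), χ (u : ZMod (p ^ t))
      + ∑ χ ∈ univ.filter
        (fun χ : DirichletCharacter ℂ (p ^ t) => ¬χ.IsPrimitive), χ (u : ZMod (p ^ t))
      = ∑ χ : DirichletCharacter ℂ (p ^ t), χ (u : ZMod (p ^ t)) :=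
    Finset.sum_filter_add_sum_filter_not Finset.univ _ _
  rw [← htot, ← hnonprim]
  linear_combination hsplit

open scoped Classical in
/-- Vanishing of the hyper-Kloosterman-type sum with product condition modulo `p^(t-1)`. -/
lemma kloosterman_mod_vanish (p : ℕ) [Fact p.Prime] {t : ℕ} (ht : 2 ≤ t) {m : ℕ}
    (hm : m ≠ 0) (c : (ZMod (p ^ (t - 1)))ˣ) :
    ∑ g ∈ univ.filter (fun g : Fin m → (ZMod (p ^ t))ˣ =>
        ZMod.unitsMap (pow_dvd_pow p (Nat.sub_le t 1)) (∏ i, g i) = c),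
      ZMod.stdAddChar (∑ i, ((g i : ZMod (p ^ t)))) = 0 := by
  classical
  obtain ⟨m', rfl⟩ := Nat.exists_eq_succ_of_ne_zero hm
  have hp : p.Prime := Fact.out
  haveI : NeZero (p ^ t) := ⟨pow_ne_zero t hp.ne_zero⟩
  rw [Finset.sum_filter]
  set F : (Fin (m' + 1) → (ZMod (p ^ t))ˣ) → ℂ := fun g =>
    if ZMod.unitsMap (pow_dvd_pow p (Nat.sub_le t 1)) (∏ i, g i) = c
      then ZMod.stdAddChar (∑ i, ((g i : ZMod (p ^ t)))) else 0 with hF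
  show ∑ g : Fin (m' + 1) → (ZMod (p ^ t))ˣ, F g = 0
  have hbij : Function.Bijective
      (fun y : (ZMod (p ^ t))ˣ × (Fin m' → (ZMod (p ^ t))ˣ) =>
        (Fin.cons y.1 y.2 : Fin (m' + 1) → (ZMod (p ^ t))ˣ)) :=
    (Fin.consEquiv (fun _ : Fin (m' + 1) => (ZMod (p ^ t))ˣ)).bijective
  rw [← Fintype.sum_bijective _ hbij
    (fun y : (ZMod (p ^ t))ˣ × (Fin m' → (ZMod (p ^ t))ˣ) => F (Fin.cons y.1 y.2)) F
    (fun y => rfl)]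
  rw [Fintype.sum_prod_type, Finset.sum_comm]
  rw [← Finset.sum_const_zero (s := (univ : Finset (Fin m' → (ZMod (p ^ t))ˣ)))]
  refine Finset.sum_congr rfl fun h _ => ?_
  have hterm : ∀ x : (ZMod (p ^ t))ˣ, F (Fin.cons x h)
      = (if ZMod.unitsMap (pow_dvd_pow p (Nat.sub_le t 1)) x
            = c * (ZMod.unitsMap (pow_dvd_pow p (Nat.sub_le t 1)) (∏ i, h i))⁻¹
          then ZMod.stdAddChar (x : ZMod (p ^ t)) else 0)
          * ZMod.stdAddChar (∑ i, ((h i : ZMod (p ^ t)))) := by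
    intro x
    have hprod : (∏ i, (Fin.cons x h : Fin (m' + 1) → (ZMod (p ^ t))ˣ) i) = x * ∏ i, h i := by
      rw [Fin.prod_univ_succ]
      simp
    have hsum : (∑ i, (((Fin.cons x h : Fin (m' + 1) → (ZMod (p ^ t))ˣ) i : ZMod (p ^ t))))
        = (x : ZMod (p ^ t)) + ∑ i, ((h i : ZMod (p ^ t))) := by
      rw [Fin.sum_univ_succ]
      simp
    rw [hF]
    simp only [hprod, hsum, map_mul, AddChar.map_add_eq_mul]
    have hcond : (ZMod.unitsMap (pow_dvd_pow p (Nat.sub_le t 1)) x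
          * ZMod.unitsMap (pow_dvd_pow p (Nat.sub_le t 1)) (∏ i, h i) = c)
        ↔ (ZMod.unitsMap (pow_dvd_pow p (Nat.sub_le t 1)) x
          = c * (ZMod.unitsMap (pow_dvd_pow p (Nat.sub_le t 1)) (∏ i, h i))⁻¹) := by
      rw [eq_mul_inv_iff_mul_eq]
    simp only [hcond]
    split_ifs <;> ring
  simp_rw [hterm]
  rw [← Finset.sum_mul]
  have hz := unit_fiber_sum_zero p ht
    (c * (ZMod.unitsMap (pow_dvd_pow p (Nat.sub_le t 1)) (∏ i, h i))⁻¹)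
  rw [Finset.sum_filter] at hz
  rw [hz, zero_mul]

end SumPrimCharAux

open SumPrimCharAux

open Finset in
open scoped Classical in
/-- Finite arithmetic content of the Bessel-transform computation for `GL_n` with trivial
central character: for `t ≥ 2`, `n ≥ 2` and a unit `w` mod `p^t`,
`∑_{χ primitive mod p^t} χ(w) τ(χ) τ(χ⁻¹)^n = p^t · φ(p^t) · Kl_{n-1}(-w; p^t)`. -/
theorem sum_primitive_char_eps_eq_kloosterman (p : ℕ) [Fact p.Prime] (t : ℕ) (ht : 2 ≤ t)
    (n : ℕ) (hn : 2 ≤ n) (w : (ZMod (p ^ t))ˣ) :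
    ∑ χ ∈ univ.filter (fun χ : DirichletCharacter ℂ (p ^ t) => χ.IsPrimitive),
        χ (w : ZMod (p ^ t)) * gaussSum χ ZMod.stdAddChar *
          (gaussSum χ⁻¹ ZMod.stdAddChar) ^ n =
      (p : ℂ) ^ t * (Nat.totient (p ^ t) : ℂ) *
        ∑ x ∈ univ.filter (fun x : Fin (n - 1) → (ZMod (p ^ t))ˣ => ∏ i, x i = -w),
          ZMod.stdAddChar (∑ i, (x i : ZMod (p ^ t))) := by
  classical
  have hp : p.Prime := Fact.out
  haveI : NeZero (p ^ t) := ⟨pow_ne_zero t hp.ne_zero⟩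
  haveI : NeZero (p ^ (t - 1)) := ⟨pow_ne_zero _ hp.ne_zero⟩
  set v : (ZMod (p ^ t))ˣ := -w with hv
  -- Step 1: per-character expansion
  have step1 : ∀ χ ∈ univ.filter (fun χ : DirichletCharacter ℂ (p ^ t) => χ.IsPrimitive),
      χ (w : ZMod (p ^ t)) * gaussSum χ ZMod.stdAddChar *
        (gaussSum χ⁻¹ ZMod.stdAddChar) ^ n
      = ∑ g : Fin (n - 1) → (ZMod (p ^ t))ˣ,
          ((p ^ t : ℕ) : ℂ) * ZMod.stdAddChar (∑ i, ((g i : ZMod (p ^ t)))) *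
            χ ((v * (∏ i, g i)⁻¹ : (ZMod (p ^ t))ˣ) : ZMod (p ^ t)) := by
    intro χ hχ
    obtain ⟨-, hχ⟩ := Finset.mem_filter.mp hχ
    have hpow : (gaussSum χ⁻¹ ZMod.stdAddChar) ^ n
        = (gaussSum χ⁻¹ ZMod.stdAddChar) ^ (n - 1) * gaussSum χ⁻¹ ZMod.stdAddChar := by
      rw [← pow_succ]
      congr 1
      omega
    rw [hpow, gauss_pow χ (n - 1)]
    have hpair := gauss_pair hχ
    rw [Finset.sum_mul, Finset.mul_sum]
    refine Finset.sum_congr rfl fun g _ => ?_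
    have hval : χ (-1 : ZMod (p ^ t)) * χ (w : ZMod (p ^ t)) *
        χ⁻¹ ((∏ i, g i : (ZMod (p ^ t))ˣ) : ZMod (p ^ t))
        = χ ((v * (∏ i, g i)⁻¹ : (ZMod (p ^ t))ˣ) : ZMod (p ^ t)) := by
      rw [MulChar.inv_apply, Ring.inverse_unit, ← map_mul, ← map_mul]
      congr 1
      rw [hv]
      push_cast
      ring
    calc χ (w : ZMod (p ^ t)) * gaussSum χ ZMod.stdAddChar *
          (χ⁻¹ ((∏ i, g i : (ZMod (p ^ t))ˣ) : ZMod (p ^ t)) *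
            ZMod.stdAddChar (∑ i, ((g i : ZMod (p ^ t)))) * gaussSum χ⁻¹ ZMod.stdAddChar)
        = (gaussSum χ ZMod.stdAddChar * gaussSum χ⁻¹ ZMod.stdAddChar) *
            ZMod.stdAddChar (∑ i, ((g i : ZMod (p ^ t)))) *
            (χ (w : ZMod (p ^ t)) * χ⁻¹ ((∏ i, g i : (ZMod (p ^ t))ˣ) : ZMod (p ^ t))) := by
          ring
      _ = ((p ^ t : ℕ) : ℂ) * ZMod.stdAddChar (∑ i, ((g i : ZMod (p ^ t)))) *
            (χ (-1 : ZMod (p ^ t)) * χ (w : ZMod (p ^ t)) *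
              χ⁻¹ ((∏ i, g i : (ZMod (p ^ t))ˣ) : ZMod (p ^ t))) := by
          rw [hpair]
          ring
      _ = _ := by rw [hval]
  rw [Finset.sum_congr rfl step1, Finset.sum_comm]
  -- Step 2: inner character sum
  have step2 : ∀ g : Fin (n - 1) → (ZMod (p ^ t))ˣ,
      ∑ χ ∈ univ.filter (fun χ : DirichletCharacter ℂ (p ^ t) => χ.IsPrimitive),
        ((p ^ t : ℕ) : ℂ) * ZMod.stdAddChar (∑ i, ((g i : ZMod (p ^ t)))) *
          χ ((v * (∏ i, g i)⁻¹ : (ZMod (p ^ t))ˣ) : ZMod (p ^ t))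
      = ((p ^ t : ℕ) : ℂ) * (((p ^ t).totient : ℂ)) *
          (if ∏ i, g i = v then ZMod.stdAddChar (∑ i, ((g i : ZMod (p ^ t)))) else 0)
        - ((p ^ t : ℕ) : ℂ) * (((p ^ (t - 1)).totient : ℂ)) *
          (if ZMod.unitsMap (pow_dvd_pow p (Nat.sub_le t 1)) (∏ i, g i)
              = ZMod.unitsMap (pow_dvd_pow p (Nat.sub_le t 1)) v
            then ZMod.stdAddChar (∑ i, ((g i : ZMod (p ^ t)))) else 0) := by
    intro g
    rw [← Finset.mul_sum, sum_prim_char p ht (v * (∏ i, g i)⁻¹)]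
    have hc1 : (v * (∏ i, g i)⁻¹ = 1) ↔ (∏ i, g i = v) := by
      rw [mul_inv_eq_one, eq_comm]
    have hc2 : (ZMod.unitsMap (pow_dvd_pow p (Nat.sub_le t 1)) (v * (∏ i, g i)⁻¹) = 1)
        ↔ (ZMod.unitsMap (pow_dvd_pow p (Nat.sub_le t 1)) (∏ i, g i)
            = ZMod.unitsMap (pow_dvd_pow p (Nat.sub_le t 1)) v) := by
      rw [map_mul, map_inv, mul_inv_eq_one, eq_comm]
    simp only [hc1, hc2]
    split_ifs <;> ring
  rw [Finset.sum_congr rfl (fun g _ => step2 g)]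
  rw [Finset.sum_sub_distrib]
  have hzero : ∑ g : Fin (n - 1) → (ZMod (p ^ t))ˣ,
      ((p ^ t : ℕ) : ℂ) * (((p ^ (t - 1)).totient : ℂ)) *
        (if ZMod.unitsMap (pow_dvd_pow p (Nat.sub_le t 1)) (∏ i, g i)
            = ZMod.unitsMap (pow_dvd_pow p (Nat.sub_le t 1)) v
          then ZMod.stdAddChar (∑ i, ((g i : ZMod (p ^ t)))) else 0) = 0 := by
    rw [← Finset.mul_sum]
    have := kloosterman_mod_vanish p ht (m := n - 1) (by omega)
      (ZMod.unitsMap (pow_dvd_pow p (Nat.sub_le t 1)) v)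
    rw [Finset.sum_filter] at this
    rw [this, mul_zero]
  rw [hzero, sub_zero, ← Finset.mul_sum, ← Finset.sum_filter]
  congr 1
  push_cast
  ring
end
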